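/- Let C ⊆ 𝔽₂^n be a binary linear code and i ≠ j two coordinates. Set Ω^{ij} = B_2^{ij} ∪ B_3^{ij} ∪ B_4^{ij} ∪ B_5^{ij} and D^{ij} = B_2^{ij} ∪ B_3^{ij} ∪ B_4^{ij}, and let ∂Ω^{ij} = {z ∈ Ω^{ij} : ∃ z' ∉ Ω^{ij} with d_H(z,z') = 1} be the boundary of Ω^{ij}. Then ∂Ω^{ij} ⊆ D^{ij}; equivalently, every z ∈ B_5^{ij} has all of its Hamming-distance-1 neighbors in Ω^{ij}. -/

import Mathlib

open scoped Classical
open Finset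

noncomputable section

/-- Vectors in 𝔽₂^n (codewords and binary patterns). -/
abbrev Pattern (n : ℕ) := Fin n → ZMod 2

/-- `z` covers `x` if the support of `x` is contained in the support of `z`. -/
def covers {n : ℕ} (z x : Pattern n) : Prop := ∀ k, x k ≠ 0 → z k ≠ 0

/-- C^{ij}_{ab}(z): codewords c ∈ C with (c_i, c_j) = (a, b) covered by z. -/
def Cab {n : ℕ} (C : Submodule (ZMod 2) (Pattern n)) (i j : Fin n) (a b : ZMod 2)
    (z : Pattern n) : Set (Pattern n) :=
  {c | c ∈ C ∧ c i = a ∧ c j = b ∧ covers z c}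

def B1 {n : ℕ} (C : Submodule (ZMod 2) (Pattern n)) (i j : Fin n) : Set (Pattern n) :=
  {z | Cab C i j 0 1 z = ∅ ∧ Cab C i j 1 0 z = ∅ ∧ Cab C i j 1 1 z = ∅}

def B2 {n : ℕ} (C : Submodule (ZMod 2) (Pattern n)) (i j : Fin n) : Set (Pattern n) :=
  {z | Cab C i j 0 1 z ≠ ∅ ∧ Cab C i j 1 0 z = ∅ ∧ Cab C i j 1 1 z = ∅}

def B3 {n : ℕ} (C : Submodule (ZMod 2) (Pattern n)) (i j : Fin n) : Set (Pattern n) :=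
  {z | Cab C i j 1 0 z ≠ ∅ ∧ Cab C i j 0 1 z = ∅ ∧ Cab C i j 1 1 z = ∅}

def B4 {n : ℕ} (C : Submodule (ZMod 2) (Pattern n)) (i j : Fin n) : Set (Pattern n) :=
  {z | Cab C i j 1 1 z ≠ ∅ ∧ Cab C i j 0 1 z = ∅ ∧ Cab C i j 1 0 z = ∅}

def B5 {n : ℕ} (C : Submodule (ZMod 2) (Pattern n)) (i j : Fin n) : Set (Pattern n) :=
  {z | Cab C i j 0 1 z ≠ ∅ ∧ Cab C i j 1 0 z ≠ ∅ ∧ Cab C i j 1 1 z ≠ ∅}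

/-- Ω^{ij} = B₂ ∪ B₃ ∪ B₄ ∪ B₅. -/
def OmIJ {n : ℕ} (C : Submodule (ZMod 2) (Pattern n)) (i j : Fin n) : Set (Pattern n) :=
  B2 C i j ∪ B3 C i j ∪ B4 C i j ∪ B5 C i j

/-- D^{ij} = B₂ ∪ B₃ ∪ B₄. -/
def DIJ {n : ℕ} (C : Submodule (ZMod 2) (Pattern n)) (i j : Fin n) : Set (Pattern n) :=
  B2 C i j ∪ B3 C i j ∪ B4 C i j

/-- The boundary of Ω^{ij}. -/
def bdryOmIJ {n : ℕ} (C : Submodule (ZMod 2) (Pattern n)) (i j : Fin n) : Set (Pattern n) :=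
  {z ∈ OmIJ C i j | ∃ z', z' ∉ OmIJ C i j ∧ hammingDist z z' = 1}

/-! Adding two codewords covered by `z` gives a codeword covered by `z` whose `(i, j)`-pattern is
the sum of theirs, so as soon as two of `C^{ij}_{01}(z)`, `C^{ij}_{10}(z)`, `C^{ij}_{11}(z)` are
nonempty, so is the third: `z ∈ Ω^{ij}` as soon as one of them is. Let `z'` agree with `z` off a
coordinate `k`, and `z ∈ B₅` with witnesses `c₀₁ ∈ C^{ij}_{01}(z)`, `c₁₀ ∈ C^{ij}_{10}(z)`. Every
codeword covered by `z` and vanishing at `k` is covered by `z'`, as is every codeword covered by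
`z` if `z'_k = 1`. So `c₀₁`, `c₁₀` or `c₀₁ + c₁₀` (whose `k`-th entry is `1 + 1 = 0` otherwise)
witnesses `z' ∈ Ω^{ij}`. -/

lemma covers.add {n : ℕ} {z x y : Pattern n} (hx : covers z x) (hy : covers z y) :
    covers z (x + y) := by
  intro k hk
  by_cases hxk : x k = 0
  · exact hy k (by simpa [hxk] using hk)
  · exact hx k hxk

lemma covers.of_eq_of_ne {n : ℕ} {z z' c : Pattern n} {k : Fin n} (hc : covers z c)
    (hzz' : ∀ m, m ≠ k → z' m = z m) (hk : c k ≠ 0 → z' k ≠ 0) : covers z' c := by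
  intro m hm
  by_cases hmk : m = k
  · exact hmk ▸ hk (hmk ▸ hm)
  · exact hzz' m hmk ▸ hc m hm

section Cab

variable {n : ℕ} {C : Submodule (ZMod 2) (Pattern n)} {i j : Fin n}

lemma add_mem_Cab {a b a' b' : ZMod 2} {z c c' : Pattern n}
    (h : c ∈ Cab C i j a b z) (h' : c' ∈ Cab C i j a' b' z) :
    c + c' ∈ Cab C i j (a + a') (b + b') z := by
  obtain ⟨hc, hci, hcj, hcov⟩ := h
  obtain ⟨hc', hci', hcj', hcov'⟩ := h'
  exact ⟨C.add_mem hc hc', by simp [hci, hci'], by simp [hcj, hcj'], hcov.add hcov'⟩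

lemma Cab_add_nonempty {a b a' b' : ZMod 2} {z : Pattern n}
    (h : (Cab C i j a b z).Nonempty) (h' : (Cab C i j a' b' z).Nonempty) :
    (Cab C i j (a + a') (b + b') z).Nonempty :=
  let ⟨c, hc⟩ := h
  let ⟨c', hc'⟩ := h'
  ⟨c + c', add_mem_Cab hc hc'⟩

lemma mem_OmIJ_of_nonempty {z : Pattern n}
    (h : (Cab C i j 0 1 z).Nonempty ∨ (Cab C i j 1 0 z).Nonempty ∨ (Cab C i j 1 1 z).Nonempty) :
    z ∈ OmIJ C i j := by
  have h₁₁ := @Cab_add_nonempty n C i j 0 1 1 0 z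
  have h₁₀ := @Cab_add_nonempty n C i j 0 1 1 1 z
  have h₀₁ := @Cab_add_nonempty n C i j 1 0 1 1 z
  simp only [zero_add, add_zero, show (1 + 1 : ZMod 2) = 0 from rfl] at h₁₁ h₁₀ h₀₁
  simp only [OmIJ, B2, B3, B4, B5, Set.mem_union, Set.mem_ofPred_eq,
    ← Set.nonempty_iff_ne_empty, ← Set.not_nonempty_iff_eq_empty]
  tauto

lemma mem_Cab_of_eq_of_ne {a b : ZMod 2} {z z' c : Pattern n} {k : Fin n}
    (hc : c ∈ Cab C i j a b z) (hzz' : ∀ m, m ≠ k → z' m = z m) (hk : c k ≠ 0 → z' k ≠ 0) :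
    c ∈ Cab C i j a b z' :=
  ⟨hc.1, hc.2.1, hc.2.2.1, hc.2.2.2.of_eq_of_ne hzz' hk⟩

lemma mem_OmIJ_of_mem_B5_of_eq_of_ne {z z' : Pattern n} {k : Fin n} (hz : z ∈ B5 C i j)
    (hzz' : ∀ m, m ≠ k → z' m = z m) : z' ∈ OmIJ C i j := by
  obtain ⟨c₀₁, hc₀₁⟩ := Set.nonempty_iff_ne_empty.2 hz.1
  obtain ⟨c₁₀, hc₁₀⟩ := Set.nonempty_iff_ne_empty.2 hz.2.1
  apply mem_OmIJ_of_nonempty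
  by_cases hz'k : z' k ≠ 0
  · exact Or.inl ⟨c₀₁, mem_Cab_of_eq_of_ne hc₀₁ hzz' fun _ => hz'k⟩
  by_cases h₀₁ : c₀₁ k = 0
  · exact Or.inl ⟨c₀₁, mem_Cab_of_eq_of_ne hc₀₁ hzz' fun h => absurd h₀₁ h⟩
  by_cases h₁₀ : c₁₀ k = 0
  · exact Or.inr (Or.inl ⟨c₁₀, mem_Cab_of_eq_of_ne hc₁₀ hzz' fun h => absurd h₁₀ h⟩)
  have hsum : (c₀₁ + c₁₀) k = 0 := by
    rw [Pi.add_apply, Fin.eq_one_of_ne_zero _ h₀₁, Fin.eq_one_of_ne_zero _ h₁₀]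
    rfl
  exact Or.inr (Or.inr ⟨c₀₁ + c₁₀,
    mem_Cab_of_eq_of_ne (add_mem_Cab hc₀₁ hc₁₀) hzz' fun h => absurd hsum h⟩)

end Cab

lemma exists_eq_of_ne_of_hammingDist_eq_one {n : ℕ} {z z' : Pattern n}
    (hd : hammingDist z z' = 1) : ∃ k, ∀ m, m ≠ k → z' m = z m := by
  obtain ⟨k, hk⟩ := Finset.card_eq_one.1 hd
  refine ⟨k, fun m hm => ?_⟩
  by_contra hne
  have : m ∈ ({k} : Finset (Fin n)) := hk ▸ Finset.mem_filter.2 ⟨Finset.mem_univ m, Ne.symm hne⟩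
  exact hm (Finset.mem_singleton.1 this)

theorem boundary_subset_D_general (n : ℕ) (C : Submodule (ZMod 2) (Pattern n))
    (i j : Fin n) :
    bdryOmIJ C i j ⊆ DIJ C i j ∧
    ∀ z ∈ B5 C i j, ∀ z' : Pattern n, hammingDist z z' = 1 → z' ∈ OmIJ C i j := by
  have hB5 : ∀ z ∈ B5 C i j, ∀ z' : Pattern n, hammingDist z z' = 1 → z' ∈ OmIJ C i j :=
    fun _ hz _ hd =>
      let ⟨_, hzz'⟩ := exists_eq_of_ne_of_hammingDist_eq_one hd
      mem_OmIJ_of_mem_B5_of_eq_of_ne hz hzz'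
  refine ⟨?_, hB5⟩
  rintro z ⟨hD | hz, z', hz', hd⟩
  · exact hD
  · exact absurd (hB5 z hz z' hd) hz'

theorem boundary_subset_D (n : ℕ) (C : Submodule (ZMod 2) (Pattern n))
    (i j : Fin n) (hij : i ≠ j) :
    bdryOmIJ C i j ⊆ DIJ C i j ∧
    ∀ z ∈ B5 C i j, ∀ z' : Pattern n, hammingDist z z' = 1 → z' ∈ OmIJ C i j :=
  boundary_subset_D_general n C i j

end
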